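/- arXiv:2511.09375 — 4 statements merged into one kernel-verified Lean document; each statement's English description precedes it below -/
import Mathlib

section
/- Let V be a finite-dimensional real vector space, and let η¹,…,ηᵏ ∈ V* and a family of alternating bilinear forms ω¹,…,ωᵏ on V be given. Set K = ⋂_α ker ηᵅ and R = ⋂_α ker ωᵅ (where ker ωᵅ = {v : ωᵅ(v,·)=0}). If K has codimension k, R has dimension k, and K ∩ R = 0, then there exist unique vectors R₁,…,R_k ∈ V with ηᵝ(R_α) = δ_α^β and ωᵝ(R_α,·) = 0 for all α,β, and these vectors form a basis of R. -/
/-!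
Evaluation at `η¹, …, ηᵏ` is injective on `R` because `K ∩ R = 0`, hence an isomorphism
`R ≃ ℝᵏ` since `dim R = k`. The Reeb vectors are the preimages of the standard basis of `ℝᵏ`:
they form a basis of `R`, and any family in `R` dual to the `ηᵅ` is that preimage.
-/

open Module

namespace Submodule

variable {K V ι : Type*} [Field K] [AddCommGroup V] [Module K V] [Fintype ι]
  (W : Submodule K V) [FiniteDimensional K W] (η : ι → V →ₗ[K] K)
  (hdisj : Disjoint W (⨅ i, LinearMap.ker (η i))) (hdim : finrank K W = Fintype.card ι)

noncomputable def evalEquivOfDisjoint : W ≃ₗ[K] (ι → K) :=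
  ((LinearMap.pi η).domRestrict W).linearEquivOfInjective
    (by rwa [LinearMap.injective_domRestrict_iff, LinearMap.ker_pi])
    (by rw [hdim, finrank_fintype_fun_eq_card])

lemma evalEquivOfDisjoint_apply (v : W) (j : ι) :
    W.evalEquivOfDisjoint η hdisj hdim v j = η j v := by
  simp [evalEquivOfDisjoint, LinearMap.linearEquivOfInjective_apply]

variable [DecidableEq ι]

noncomputable def basisDualOf : Basis ι K W :=
  (Pi.basisFun K ι).map (W.evalEquivOfDisjoint η hdisj hdim).symm

lemma apply_basisDualOf (i j : ι) :
    η j (W.basisDualOf η hdisj hdim i) = if j = i then 1 else 0 := by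
  rw [basisDualOf, Basis.map_apply, Pi.basisFun_apply]
  have := congrFun ((W.evalEquivOfDisjoint η hdisj hdim).apply_symm_apply (Pi.single i 1)) j
  rwa [evalEquivOfDisjoint_apply, Pi.single_apply] at this

lemma eq_basisDualOf {v : V} (hv : v ∈ W) {i : ι} (hη : ∀ j, η j v = if j = i then 1 else 0) :
    v = W.basisDualOf η hdisj hdim i := by
  have hcoord : W.evalEquivOfDisjoint η hdisj hdim ⟨v, hv⟩ = Pi.single i 1 := by
    funext j
    rw [evalEquivOfDisjoint_apply, Pi.single_apply]
    exact hη j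
  rw [basisDualOf, Basis.map_apply, Pi.basisFun_apply, ← hcoord, LinearEquiv.symm_apply_apply]

end Submodule

theorem stmt0_general (k : ℕ) (V : Type*) [AddCommGroup V] [Module ℝ V] [FiniteDimensional ℝ V]
    (η : Fin k → V →ₗ[ℝ] ℝ) (ω : Fin k → V →ₗ[ℝ] V →ₗ[ℝ] ℝ)
    (hR : finrank ℝ ↥(⨅ α, LinearMap.ker (ω α)) = k)
    (hKR : (⨅ α, LinearMap.ker (η α)) ⊓ (⨅ α, LinearMap.ker (ω α)) = ⊥) :
    ∃! R : Fin k → V,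
      (∀ α β, η β (R α) = if β = α then 1 else 0) ∧
      (∀ α β, ω β (R α) = 0) ∧
      LinearIndependent ℝ R ∧
      Submodule.span ℝ (Set.range R) = ⨅ α, LinearMap.ker (ω α) := by
  set W := ⨅ α, LinearMap.ker (ω α)
  have mem_W {v : V} : v ∈ W ↔ ∀ β, ω β v = 0 := by
    simp only [W, Submodule.mem_iInf, LinearMap.mem_ker]
  let b := W.basisDualOf η (disjoint_iff.2 hKR).symm (by simpa using hR)
  refine ⟨fun α => b α, ⟨W.apply_basisDualOf η _ _, fun α => mem_W.1 (b α).2,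
    b.linearIndependent.map' W.subtype W.ker_subtype, ?_⟩, ?_⟩
  · rw [← Function.comp_def, Set.range_comp, ← W.coe_subtype, Submodule.span_image, b.span_eq,
      Submodule.map_subtype_top]
  · rintro R ⟨hη, hω, -⟩
    funext α
    exact W.eq_basisDualOf η _ _ (mem_W.2 (hω α)) (hη α)

/-- Pointwise linear-algebra content of existence and uniqueness of Reeb vector fields
on a k-contact manifold. -/
theorem stmt0 (k : ℕ) (V : Type*) [AddCommGroup V] [Module ℝ V] [FiniteDimensional ℝ V]
    (η : Fin k → V →ₗ[ℝ] ℝ) (ω : Fin k → V →ₗ[ℝ] V →ₗ[ℝ] ℝ)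
    (halt : ∀ α v, ω α v v = 0)
    (hK : finrank ℝ ↥(⨅ α, LinearMap.ker (η α)) + k = finrank ℝ V)
    (hR : finrank ℝ ↥(⨅ α, LinearMap.ker (ω α)) = k)
    (hKR : (⨅ α, LinearMap.ker (η α)) ⊓ (⨅ α, LinearMap.ker (ω α)) = ⊥) :
    ∃! R : Fin k → V,
      (∀ α β, η β (R α) = if β = α then 1 else 0) ∧
      (∀ α β, ω β (R α) = 0) ∧
      LinearIndependent ℝ R ∧
      Submodule.span ℝ (Set.range R) = ⨅ α, LinearMap.ker (ω α) :=
  stmt0_general k V η ω hR hKR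
end

section
/- Let (M,η) be a k-contact manifold with Reeb vector fields R₁,…,R_k defined by ι_{R_α}ηᵝ = δ_α^β and ι_{R_α}dηᵝ = 0. Then the Reeb vector fields pairwise commute: [R_α, R_β] = 0 for all α,β. -/
private lemma ev {E F G : Type*} [NormedAddCommGroup E] [NormedSpace ℝ E]
    [NormedAddCommGroup F] [NormedSpace ℝ F] [NormedAddCommGroup G] [NormedSpace ℝ G]
    {f : E → F →L[ℝ] G} {g : E → F} {x : E}
    (hf : DifferentiableAt ℝ f x) (hg : DifferentiableAt ℝ g x) (u : E) :
    fderiv ℝ (fun y => f y (g y)) x u = fderiv ℝ f x u (g x) + f x (fderiv ℝ g x u) := by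
  rw [fderiv_clm_apply hf hg]
  simp [ContinuousLinearMap.add_apply]
  abel

/-- On a k-contact manifold (modelled on a finite-dimensional normed space), the Reeb
vector fields `R α`, defined by `ι_{R α} η^β = δ_α^β` and `ι_{R α} dη^β = 0`, pairwise
commute.  Here `dη^β x v w = (D(η^β) x v) w - (D(η^β) x w) v` is the pointwise exterior
derivative and the Lie bracket is `[X,Y] x = DY x (X x) - DX x (Y x)`. -/
theorem stmt1 {k : ℕ} {E : Type*} [NormedAddCommGroup E] [NormedSpace ℝ E]
    [FiniteDimensional ℝ E]
    (η : Fin k → E → (E →L[ℝ] ℝ)) (R : Fin k → E → E)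
    (hη : ∀ α, ContDiff ℝ (⊤ : ℕ∞) (η α)) (hR : ∀ α, ContDiff ℝ (⊤ : ℕ∞) (R α))
    (hreeb1 : ∀ α β x, η β x (R α x) = if β = α then 1 else 0)
    (hreeb2 : ∀ α β x w, fderiv ℝ (η β) x (R α x) w - fderiv ℝ (η β) x w (R α x) = 0)
    (hnd : ∀ x v, (∀ α, η α x v = 0) →
      (∀ α w, fderiv ℝ (η α) x v w - fderiv ℝ (η α) x w v = 0) → v = 0) :
    ∀ α β x, fderiv ℝ (R β) x (R α x) - fderiv ℝ (R α) x (R β x) = 0 := by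
  have hηd : ∀ γ, Differentiable ℝ (η γ) := fun γ => (hη γ).differentiable (by simp)
  have hRd : ∀ α, Differentiable ℝ (R α) := fun α => (hR α).differentiable (by simp)
  have hDη : ∀ γ, ContDiff ℝ (⊤ : ℕ∞) (fderiv ℝ (η γ)) := fun γ =>
    (hη γ).fderiv_right (by simp)
  have hDηd : ∀ γ, Differentiable ℝ (fderiv ℝ (η γ)) := fun γ => (hDη γ).differentiable (by simp)
  -- symmetry of second derivative
  have hsym : ∀ γ x u v, fderiv ℝ (fderiv ℝ (η γ)) x u v = fderiv ℝ (fderiv ℝ (η γ)) x v u := by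
    intro γ x u v
    exact ((hη γ).contDiffAt.isSymmSndFDerivAt (by rw [minSmoothness_of_isRCLikeNormedField]; exact WithTop.coe_le_coe.mpr (le_top : (2 : ℕ∞) ≤ ⊤))) u v
  -- (1) differentiating η γ (R α) = const
  have h1 : ∀ γ α x u, fderiv ℝ (η γ) x u (R α x) + η γ x (fderiv ℝ (R α) x u) = 0 := by
    intro γ α x u
    have hc : (fun y => η γ y (R α y)) = fun _ : E => (if γ = α then (1:ℝ) else 0) :=
      funext fun y => hreeb1 α γ y
    have h0 : fderiv ℝ (fun y => η γ y (R α y)) x = 0 := by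
      rw [hc]; exact fderiv_const_apply _
    have := ev (hηd γ x) (hRd α x) u
    rw [h0] at this
    simpa using this.symm
  -- differentiability of auxiliary maps
  have hdw : ∀ γ (w : E), Differentiable ℝ (fun y => fderiv ℝ (η γ) y w) := by
    intro γ w
    exact (hDηd γ).clm_apply (differentiable_const w)
  have hdwf : ∀ γ (w : E) x u,
      fderiv ℝ (fun y => fderiv ℝ (η γ) y w) x u = fderiv ℝ (fderiv ℝ (η γ)) x u w := by
    intro γ w x u
    have := ev (f := fderiv ℝ (η γ)) (g := fun _ => w) (hDηd γ x) (differentiableAt_const w) u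
    simpa using this
  have hgR : ∀ γ α, Differentiable ℝ (fun y => fderiv ℝ (η γ) y (R α y)) := by
    intro γ α
    exact (hDηd γ).clm_apply (hRd α)
  have hgRf : ∀ γ α x u, fderiv ℝ (fun y => fderiv ℝ (η γ) y (R α y)) x u
      = fderiv ℝ (fderiv ℝ (η γ)) x u (R α x) + fderiv ℝ (η γ) x (fderiv ℝ (R α) x u) := by
    intro γ α x u
    exact ev (hDηd γ x) (hRd α x) u
  -- (2) differentiating hreeb2
  have h2 : ∀ γ α x u w,
      fderiv ℝ (fderiv ℝ (η γ)) x u (R α x) w + fderiv ℝ (η γ) x (fderiv ℝ (R α) x u) w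
      = fderiv ℝ (fderiv ℝ (η γ)) x u w (R α x) + fderiv ℝ (η γ) x w (fderiv ℝ (R α) x u) := by
    intro γ α x u w
    -- function y ↦ fderiv (η γ) y (R α y) w
    have d1 : fderiv ℝ (fun y => fderiv ℝ (η γ) y (R α y) w) x u
        = fderiv ℝ (fderiv ℝ (η γ)) x u (R α x) w + fderiv ℝ (η γ) x (fderiv ℝ (R α) x u) w := by
      have := ev (f := fun y => fderiv ℝ (η γ) y (R α y)) (g := fun _ => w)
        ((hgR γ α) x) (differentiableAt_const w) u
      simpa [hgRf γ α x u] using this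
    have d2 : fderiv ℝ (fun y => fderiv ℝ (η γ) y w (R α y)) x u
        = fderiv ℝ (fderiv ℝ (η γ)) x u w (R α x) + fderiv ℝ (η γ) x w (fderiv ℝ (R α) x u) := by
      have := ev (f := fun y => fderiv ℝ (η γ) y w) (g := R α)
        ((hdw γ w) x) (hRd α x) u
      simpa [hdwf γ w x u] using this
    have hz : (fun y => fderiv ℝ (η γ) y (R α y) w) = (fun y => fderiv ℝ (η γ) y w (R α y)) := by
      funext y
      have := hreeb2 α γ y w
      linarith
    have : fderiv ℝ (fun y => fderiv ℝ (η γ) y (R α y) w) x u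
        = fderiv ℝ (fun y => fderiv ℝ (η γ) y w (R α y)) x u := by rw [hz]
    rw [d1, d2] at this
    linarith
  -- main argument
  intro α β x
  set v : E := fderiv ℝ (R β) x (R α x) - fderiv ℝ (R α) x (R β x) with hv
  have key : v = 0 := by
    apply hnd x v
    · -- η γ x v = 0
      intro γ
      have e1 := h1 γ β x (R α x)
      have e2 := h1 γ α x (R β x)
      have e3 := hreeb2 α γ x (R β x)
      have : η γ x v = η γ x (fderiv ℝ (R β) x (R α x)) - η γ x (fderiv ℝ (R α) x (R β x)) := by
        rw [hv, map_sub]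
      rw [this]
      linarith
    · -- dη γ x v w = 0
      intro γ w
      have eI := h2 γ β x (R α x) w
      have eII := h2 γ α x (R β x) w
      have eIII := h2 γ α x w (R β x)
      -- hreeb2 β applied to fderiv (R α) x w
      have e4 := hreeb2 β γ x (fderiv ℝ (R α) x w)
      -- from eIII and e4 : D²η w Rα Rβ = D²η w Rβ Rα
      have eS1 : fderiv ℝ (fderiv ℝ (η γ)) x w (R α x) (R β x)
          = fderiv ℝ (fderiv ℝ (η γ)) x w (R β x) (R α x) := by linarith
      have s1 := hsym γ x (R α x) (R β x)
      have s1' : fderiv ℝ (fderiv ℝ (η γ)) x (R α x) (R β x) w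
          = fderiv ℝ (fderiv ℝ (η γ)) x (R β x) (R α x) w := by rw [s1]
      have s2 := hsym γ x (R α x) w
      have s2' : fderiv ℝ (fderiv ℝ (η γ)) x (R α x) w (R β x)
          = fderiv ℝ (fderiv ℝ (η γ)) x w (R α x) (R β x) := by rw [s2]
      have s3 := hsym γ x (R β x) w
      have s3' : fderiv ℝ (fderiv ℝ (η γ)) x (R β x) w (R α x)
          = fderiv ℝ (fderiv ℝ (η γ)) x w (R β x) (R α x) := by rw [s3]
      have expand1 : fderiv ℝ (η γ) x v w
          = fderiv ℝ (η γ) x (fderiv ℝ (R β) x (R α x)) w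
            - fderiv ℝ (η γ) x (fderiv ℝ (R α) x (R β x)) w := by
        rw [hv, map_sub]; rfl
      have expand2 : fderiv ℝ (η γ) x w v
          = fderiv ℝ (η γ) x w (fderiv ℝ (R β) x (R α x))
            - fderiv ℝ (η γ) x w (fderiv ℝ (R α) x (R β x)) := by
        rw [hv, map_sub]
      rw [expand1, expand2]
      linarith
  exact key
end

section
/- Let V be a finite-dimensional vector space, η¹,…,ηᵏ ∈ V*, and ω¹,…,ωᵏ alternating bilinear forms on V, with K = ⋂ ker ηᵅ of codimension k, R = ⋂ ker ωᵅ of dimension k, and K ∩ R = 0. Then the linear map ρ₁ : ⊕ᵏ K → R° ⊂ V* sending (v₁,…,v_k) to Σ_α ωᵅ(v_α, ·) is surjective onto R°; that is, for every covector ξ ∈ V* annihilating R there exist v₁,…,v_k ∈ K with Σ_α ι_{v_α}ωᵅ = ξ on V. -/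
open Module

/-- Pointwise surjectivity underlying the existence of solutions of the geometric
Hamilton–de Donder–Weyl equations on a k-contact manifold: every covector annihilating
`R = ⋂ ker ωᵅ` is of the form `Σ_α ι_{v_α} ωᵅ` with `v_α ∈ K = ⋂ ker ηᵅ`. -/
theorem stmt7 (k : ℕ) (V : Type*) [AddCommGroup V] [Module ℝ V] [FiniteDimensional ℝ V]
    (η : Fin k → V →ₗ[ℝ] ℝ) (ω : Fin k → V →ₗ[ℝ] V →ₗ[ℝ] ℝ)
    (halt : ∀ α v, ω α v v = 0)
    (hK : finrank ℝ ↥(⨅ α, LinearMap.ker (η α)) + k = finrank ℝ V)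
    (hR : finrank ℝ ↥(⨅ α, LinearMap.ker (ω α)) = k)
    (hKR : (⨅ α, LinearMap.ker (η α)) ⊓ (⨅ α, LinearMap.ker (ω α)) = ⊥) :
    ∀ ξ : V →ₗ[ℝ] ℝ, (∀ r ∈ (⨅ α, LinearMap.ker (ω α)), ξ r = 0) →
      ∃ v : Fin k → V, (∀ α, v α ∈ ⨅ α', LinearMap.ker (η α')) ∧
        ∀ w, (∑ α, ω α (v α) w) = ξ w := by
  intro ξ hξ
  set K := ⨅ α, LinearMap.ker (η α) with hKdef
  set R := ⨅ α, LinearMap.ker (ω α) with hRdef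
  -- skew-symmetry
  have hskew : ∀ α (v w : V), ω α v w = - ω α w v := by
    intro α v w
    have h := halt α (v + w)
    simp only [map_add, LinearMap.add_apply, halt α v, halt α w] at h
    linarith
  -- ω α r = 0 for r ∈ R
  have hRker : ∀ α, ∀ r ∈ R, ω α r = 0 := by
    intro α r hr
    exact (Submodule.mem_iInf _).mp hr α
  -- K ⊔ R = ⊤
  have hsup : K ⊔ R = ⊤ := by
    apply Submodule.eq_top_of_finrank_eq
    have := Submodule.finrank_sup_add_finrank_inf_eq K R
    rw [hKR, finrank_bot, add_zero, hR] at this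
    omega
  -- the map ρ : K^k → Dual K
  set ρ : (Fin k → K) →ₗ[ℝ] Module.Dual ℝ K :=
    ∑ α, ((((ω α).domRestrict K).compl₂ K.subtype).comp (LinearMap.proj α)) with hρ
  have hρapp : ∀ (v : Fin k → K) (w : K), ρ v w = ∑ α, ω α (v α) w := by
    intro v w
    simp [hρ, LinearMap.sum_apply]
  -- range ρ = ⊤
  have hcoann : (LinearMap.range ρ).dualCoannihilator = ⊥ := by
    rw [Submodule.eq_bot_iff]
    intro x hx
    rw [Submodule.mem_dualCoannihilator] at hx
    -- ω α x w = 0 for all w ∈ K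
    have h1 : ∀ α, ∀ w ∈ K, ω α (x : V) w = 0 := by
      intro α w hw
      have := hx (ρ (Function.update 0 α ⟨w, hw⟩)) ⟨_, rfl⟩
      rw [hρapp] at this
      have hs : ∑ β, ω β ((Function.update (0 : Fin k → K) α ⟨w, hw⟩ β : K) : V) (x : V)
          = ω α w (x : V) := by
        rw [Finset.sum_eq_single α]
        · simp
        · intro b _ hb; simp [Function.update_of_ne hb]
        · simp
      rw [hs] at this
      rw [hskew, this, neg_zero]
    -- hence ω α x = 0 on all of V
    have h2 : ∀ α, ω α (x : V) = 0 := by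
      intro α
      ext w
      have hw : w ∈ K ⊔ R := hsup ▸ Submodule.mem_top
      obtain ⟨a, ha, b, hb, rfl⟩ := Submodule.mem_sup.mp hw
      have hb' : ω α (x : V) b = 0 := by
        rw [hskew]
        rw [hRker α b hb]
        simp
      simp [h1 α a ha, hb']
    have hxR : (x : V) ∈ R := by
      rw [hRdef, Submodule.mem_iInf]
      intro α
      exact h2 α
    have : (x : V) ∈ K ⊓ R := ⟨x.2, hxR⟩
    rw [hKR] at this
    exact Subtype.ext this
  have hrange : LinearMap.range ρ = ⊤ := by
    apply Submodule.eq_top_of_finrank_eq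
    have := Subspace.finrank_add_finrank_dualCoannihilator_eq (LinearMap.range ρ)
    rw [hcoann, finrank_bot, add_zero] at this
    rw [this, Subspace.dual_finrank_eq]
  -- apply to ξ restricted to K
  have : (ξ.comp K.subtype : Module.Dual ℝ K) ∈ LinearMap.range ρ := hrange ▸ Submodule.mem_top
  obtain ⟨v, hv⟩ := this
  refine ⟨fun α => (v α : V), fun α => (v α).2, fun w => ?_⟩
  have hw : w ∈ K ⊔ R := hsup ▸ Submodule.mem_top
  obtain ⟨a, ha, b, hb, rfl⟩ := Submodule.mem_sup.mp hw
  have hKa : ∑ α, ω α ((v α : V)) a = ξ a := by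
    have := congrFun (congrArg (DFunLike.coe) hv) ⟨a, ha⟩
    rw [hρapp] at this
    simpa using this
  have hRb : ∀ α, ω α ((v α : V)) b = 0 := by
    intro α
    rw [hskew, hRker α b hb]
    simp
  simp only [map_add]
  rw [Finset.sum_add_distrib]
  rw [hKa]
  have : ∑ α, ω α ((v α : V)) b = 0 := by
    rw [Finset.sum_eq_zero fun α _ => hRb α]
  rw [this, add_zero, hξ b hb, add_zero]
end

section
/- Let V be a finite-dimensional vector space with a subspace C ⊂ V (the contact hyperplane-distribution fiber) and alternating forms ω¹,…,ωᵏ on V. Call a subspace E ⊂ C isotropic if ωᵅ(e,e') = 0 for all e,e' ∈ E and all α, and define the orthogonal E^⊥ = {v ∈ C : ωᵅ(v,e) = 0 for all e ∈ E, all α}. Suppose L ⊂ C is isotropic and admits a complement W ⊂ C with L ⊕ W = C and W isotropic. Then there is no isotropic subspace L' with L ⊊ L' ⊂ C; i.e., L is maximal among isotropic subspaces. -/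
/-!
If `x ∈ L' \ L` and `x = l + w` with `l ∈ L`, `w ∈ W`, then `w = x - l` lies in `L' ∩ W`, so it is
orthogonal to `L` (as `L ≤ L'` and `L'` is isotropic) and to `W` (as `W` is isotropic), hence to
`L ⊔ W = C`. Nondegeneracy on `C` forces `w = 0`, i.e. `x = l ∈ L`.
-/

theorem eq_zero_of_mem_isotropic_of_forall_apply_eq_zero {R M N ι : Type*} [CommSemiring R]
    [AddCommMonoid M] [Module R M] [AddCommMonoid N] [Module R N] {ω : ι → M →ₗ[R] M →ₗ[R] N}
    {L W : Submodule R M} (hnd : ∀ v ∈ L ⊔ W, (∀ α, ∀ u ∈ L ⊔ W, ω α v u = 0) → v = 0)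
    (hWiso : ∀ v ∈ W, ∀ u ∈ W, ∀ α, ω α v u = 0) {w : M} (hw : w ∈ W)
    (hwL : ∀ α, ∀ u ∈ L, ω α w u = 0) : w = 0 := by
  refine hnd w (Submodule.mem_sup_right hw) fun α => ?_
  have hker : L ⊔ W ≤ LinearMap.ker (ω α w) :=
    sup_le (fun u hu => hwL α u hu) (fun u hu => hWiso w hw u hu α)
  exact fun u hu => hker hu

theorem stmt9_general {k : ℕ} {V : Type*} [AddCommGroup V] [Module ℝ V]
    (C : Submodule ℝ V) (ω : Fin k → V →ₗ[ℝ] V →ₗ[ℝ] ℝ)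
    (hnd : ∀ v ∈ C, (∀ α, ∀ w ∈ C, ω α v w = 0) → v = 0)
    (L W : Submodule ℝ V)
    (hLW₂ : L ⊔ W = C)
    (hWiso : ∀ v ∈ W, ∀ w ∈ W, ∀ α, ω α v w = 0) :
    ¬ ∃ L' : Submodule ℝ V, L < L' ∧ L' ≤ C ∧ ∀ v ∈ L', ∀ w ∈ L', ∀ α, ω α v w = 0 := by
  subst hLW₂
  rintro ⟨L', hLL', hL'C, hL'iso⟩
  obtain ⟨x, hxL', hxL⟩ := SetLike.exists_of_lt hLL'
  obtain ⟨l, hl, w, hw, rfl⟩ := Submodule.mem_sup.1 (hL'C hxL')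
  have hwL' : w ∈ L' := by simpa using L'.sub_mem hxL' (hLL'.le hl)
  have hw0 : w = 0 := eq_zero_of_mem_isotropic_of_forall_apply_eq_zero hnd hWiso hw
    fun α u hu => hL'iso w hwL' u (hLL'.le hu) α
  exact hxL (by simpa [hw0] using hl)

/-- Maximality of Legendrian subspaces: if `L ⊂ C` is isotropic and admits an isotropic
complement `W` in `C` (with the forms `ωᵅ` jointly nondegenerate on `C`, coming from the
k-contact condition), then there is no strictly larger isotropic subspace `L' ⊂ C`. -/
theorem stmt9 {k : ℕ} {V : Type*} [AddCommGroup V] [Module ℝ V] [FiniteDimensional ℝ V]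
    (C : Submodule ℝ V) (ω : Fin k → V →ₗ[ℝ] V →ₗ[ℝ] ℝ)
    (halt : ∀ α v, ω α v v = 0)
    (hnd : ∀ v ∈ C, (∀ α, ∀ w ∈ C, ω α v w = 0) → v = 0)
    (L W : Submodule ℝ V) (hLC : L ≤ C) (hWC : W ≤ C)
    (hLW₁ : L ⊓ W = ⊥) (hLW₂ : L ⊔ W = C)
    (hLiso : ∀ v ∈ L, ∀ w ∈ L, ∀ α, ω α v w = 0)
    (hWiso : ∀ v ∈ W, ∀ w ∈ W, ∀ α, ω α v w = 0) :
    ¬ ∃ L' : Submodule ℝ V, L < L' ∧ L' ≤ C ∧ ∀ v ∈ L', ∀ w ∈ L', ∀ α, ω α v w = 0 :=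
  stmt9_general C ω hnd L W hLW₂ hWiso
end
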